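/- Let p be an extreme point of S and let ℓ be a halving ray for p oriented away from S. If p is moved along ℓ in the given orientation, then every mutation that occurs during this motion strictly decreases the number of crossings of S. -/

import Mathlib

open Finset
open scoped Classical

abbrev Pt : Type := ℝ × ℝ

/-- Twice the signed area of the triangle `a b c`; its sign is the orientation. -/
noncomputable def det3 (a b c : Pt) : ℝ :=
  (b.1 - a.1) * (c.2 - a.2) - (b.2 - a.2) * (c.1 - a.1)

/-- `S` is in general position: no three of its points are collinear. -/
def GenPos (S : Finset Pt) : Prop :=
  ∀ a ∈ S, ∀ b ∈ S, ∀ c ∈ S, a ≠ b → a ≠ c → b ≠ c → det3 a b c ≠ 0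

/-- A finite point set is in convex position. -/
def ConvexPos (Q : Finset Pt) : Prop :=
  ∀ x ∈ Q, x ∉ convexHull ℝ (↑(Q.erase x) : Set Pt)

/-- `crN S` : the number of 4-element subsets of `S` in convex position. -/
noncomputable def crN (S : Finset Pt) : ℕ :=
  ((S.powersetCard 4).filter ConvexPos).card

/-- Number of points of `S` strictly to the left of the directed line `p → q`. -/
noncomputable def sideCount (S : Finset Pt) (p q : Pt) : ℕ :=
  (S.filter (fun x => 0 < det3 p q x)).card

/-- `{p, q}` is a `j`-edge of `S`: exactly `j` points of `S` lie in one of the open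
half-planes bounded by the line through `p` and `q`. -/
def IsJEdge (S : Finset Pt) (j : ℕ) (p q : Pt) : Prop :=
  p ∈ S ∧ q ∈ S ∧ p ≠ q ∧ (sideCount S p q = j ∨ sideCount S q p = j)

/-- `ej S j` : the number of (unordered) `j`-edges of `S`. -/
noncomputable def ej (S : Finset Pt) (j : ℕ) : ℕ :=
  ((S.powersetCard 2).filter (fun e => ∃ p q : Pt, e = {p, q} ∧ IsJEdge S j p q)).card

/-- `Ek S k` : the number of `(≤ k)`-edges of `S`. -/
noncomputable def Ek (S : Finset Pt) (k : ℕ) : ℕ :=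
  ((S.powersetCard 2).filter
    (fun e => ∃ p q : Pt, e = {p, q} ∧ ∃ j ≤ k, IsJEdge S j p q)).card

/-- The vertices of the convex hull of `S` (its extreme points). -/
noncomputable def hullVertices (S : Finset Pt) : Finset Pt :=
  S.filter (fun x => x ∉ convexHull ℝ (↑(S.erase x) : Set Pt))

/-- Orientation of the labelled triple `a b c` of the configuration `P`. -/
noncomputable def detI {n : ℕ} (P : Fin n → Pt) (a b c : Fin n) : ℝ :=
  det3 (P a) (P b) (P c)

/-- A labelled configuration is in general position. -/
def GenPosI {n : ℕ} (P : Fin n → Pt) : Prop :=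
  ∀ a b c : Fin n, a ≠ b → a ≠ c → b ≠ c → detI P a b c ≠ 0

/-- Number of 4-element subsets of the labelled configuration in convex position. -/
noncomputable def crI {n : ℕ} (P : Fin n → Pt) : ℕ :=
  (((univ : Finset (Fin n)).powersetCard 4).filter (fun Q => ConvexPos (Q.image P))).card

/-- Number of points of the configuration strictly to the left of the directed line
`P a → P b`. -/
noncomputable def sideCountI {n : ℕ} (P : Fin n → Pt) (a b : Fin n) : ℕ :=
  ((univ : Finset (Fin n)).filter (fun l => 0 < det3 (P a) (P b) (P l))).card

/-- Number of (unordered, labelled) `m`-edges of the configuration `P`. -/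
noncomputable def ejI {n : ℕ} (P : Fin n → Pt) (m : ℕ) : ℕ :=
  (((univ : Finset (Fin n)).powersetCard 2).filter
    (fun e => ∃ a b : Fin n, e = {a, b} ∧ a ≠ b ∧
      (sideCountI P a b = m ∨ sideCountI P b a = m))).card

/-- Cross product of two planar vectors. -/
noncomputable def crossP (u v : Pt) : ℝ := u.1 * v.2 - u.2 * v.1

/-- Dot product of two planar vectors. -/
noncomputable def dotP (u v : Pt) : ℝ := u.1 * v.1 + u.2 * v.2

/-- `v` is the direction of a halving ray for the extreme point `p` of `S`:
the oriented line through `p` with direction `v` avoids `S \ {p}`, splits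
`S \ {p}` into parts of sizes `⌊(n-1)/2⌋` and `⌈(n-1)/2⌉`, and is oriented away
from `S` (its head lies outside a half-plane through `p` containing `S`). -/
noncomputable def HalvingRay (S : Finset Pt) (p v : Pt) : Prop :=
  v ≠ 0 ∧
  (∀ x ∈ S, x ≠ p → ∀ t : ℝ, x ≠ p + t • v) ∧
  ((S.filter (fun x => 0 < crossP v (x - p))).card = (S.card - 1) / 2 ∨
   (S.filter (fun x => 0 < crossP v (x - p))).card = (S.card - 1) - (S.card - 1) / 2) ∧
  (∃ w : Pt, (∀ x ∈ S, dotP w (x - p) ≤ 0) ∧ 0 < dotP w v)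

lemma det3_cycle (a b c : Pt) : det3 b c a = det3 a b c := by unfold det3; ring
lemma det3_swap12 (a b c : Pt) : det3 b a c = -det3 a b c := by unfold det3; ring
lemma det3_self12 (a c : Pt) : det3 a a c = 0 := by unfold det3; ring
lemma det3_self13 (a c : Pt) : det3 a c a = 0 := by unfold det3; ring
lemma det3_self23 (a c : Pt) : det3 a c c = 0 := by unfold det3; ring

lemma det3_eq_cross (a b c : Pt) : det3 a b c = crossP (b - a) (c - a) := by
  obtain ⟨a1, a2⟩ := a; obtain ⟨b1, b2⟩ := b; obtain ⟨c1, c2⟩ := c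
  unfold det3 crossP
  simp only [Prod.fst_sub, Prod.snd_sub]

lemma det3_affine (p v x y : Pt) (t : ℝ) :
    det3 (p + t • v) x y = det3 p x y + t * crossP v (x - y) := by
  obtain ⟨p1, p2⟩ := p; obtain ⟨v1, v2⟩ := v
  unfold det3 crossP
  simp only [Prod.smul_mk, smul_eq_mul, Prod.fst_sub, Prod.snd_sub, Prod.fst_add, Prod.snd_add,
    Prod.mk_add_mk]
  ring

lemma cross_exists {u z : Pt} (h : crossP u z = 0) (hu : u ≠ 0) : ∃ s : ℝ, z = s • u := by
  obtain ⟨u1, u2⟩ := u; obtain ⟨z1, z2⟩ := z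
  simp only [crossP] at h
  rcases eq_or_ne u1 0 with h1 | h1
  · have h2 : u2 ≠ 0 := by
      rintro rfl; exact hu (by simp [h1, Prod.ext_iff])
    refine ⟨z2 / u2, ?_⟩
    have hz1 : z1 = 0 := by
      subst h1
      have : u2 * z1 = 0 := by linarith
      rcases mul_eq_zero.1 this with h | h
      · exact absurd h h2
      · exact h
    simp [Prod.ext_iff, Prod.smul_mk, smul_eq_mul, hz1, h1]
    field_simp
  · refine ⟨z1 / u1, ?_⟩
    simp [Prod.ext_iff, Prod.smul_mk, smul_eq_mul]
    constructor
    · field_simp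
    · field_simp; nlinarith [h]

lemma affine_sign (g0 g1 a b t : ℝ) (hat : a ≤ t) (htb : t ≤ b)
    (h : 0 < (g0 + a * g1) * (g0 + b * g1)) : 0 < (g0 + a * g1) * (g0 + t * g1) := by
  have hne : g0 + a * g1 ≠ 0 := by
    intro hz; rw [hz, zero_mul] at h; exact lt_irrefl _ h
  have hsq : 0 < (g0 + a * g1) ^ 2 := by positivity
  rcases eq_or_lt_of_le hat with rfl | hat'
  · nlinarith
  · have key : (g0 + a*g1) * (g0 + t*g1) * (b - a)
        = (g0 + a*g1)^2 * (b - t) + (t - a) * ((g0 + a*g1) * (g0 + b*g1)) := by ring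
    have hab : a < b := lt_of_lt_of_le hat' htb
    have h1 : 0 < (g0 + a*g1) * (g0 + t*g1) * (b - a) := by
      nlinarith [mul_pos (sub_pos.2 hat') h, mul_nonneg hsq.le (sub_nonneg.2 htb)]
    by_contra hX
    push_neg at hX
    nlinarith [mul_nonneg (neg_nonneg.2 hX) (sub_pos.2 hab).le]


lemma det3_swap23 (a b c : Pt) : det3 a c b = -det3 a b c := by unfold det3; ring
lemma det3_swap13 (a b c : Pt) : det3 c b a = -det3 a b c := by unfold det3; ring
lemma det3_cycle' (a b c : Pt) : det3 c a b = det3 a b c := by unfold det3; ring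

lemma det3_sum3 (a b c z : Pt) : det3 b c z + det3 c a z + det3 a b z = det3 a b c := by
  unfold det3; ring

lemma cramer1 (a b c z : Pt) :
    z.1 * det3 a b c = det3 b c z * a.1 + det3 c a z * b.1 + det3 a b z * c.1 := by
  unfold det3; ring

lemma cramer2 (a b c z : Pt) :
    z.2 * det3 a b c = det3 b c z * a.2 + det3 c a z * b.2 + det3 a b z * c.2 := by
  unfold det3; ring

lemma mem_hull3 (a b c z : Pt) (hD : det3 a b c ≠ 0) :
    z ∈ convexHull ℝ (↑({a, b, c} : Finset Pt) : Set Pt) ↔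
      0 ≤ det3 a b c * det3 a b z ∧ 0 ≤ det3 a b c * det3 b c z ∧
        0 ≤ det3 a b c * det3 c a z := by
  have hab : a ≠ b := by rintro rfl; exact hD (det3_self12 _ _)
  have hac : a ≠ c := by rintro rfl; exact hD (det3_self13 _ _)
  have hbc : b ≠ c := by rintro rfl; exact hD (det3_self23 _ _)
  constructor
  · intro h
    rw [Finset.convexHull_eq] at h
    obtain ⟨w, hw0, hw1, hz⟩ := h
    rw [Finset.centerMass_eq_of_sum_1 _ _ hw1] at hz
    rw [Finset.sum_insert (by simp [hab, hac]), Finset.sum_insert (by simp [hbc]),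
      Finset.sum_singleton] at hz hw1
    simp only [id] at hz
    have h1 : z.1 = w a * a.1 + w b * b.1 + w c * c.1 := by
      rw [← hz]; simp [Prod.fst_add, Prod.smul_fst, smul_eq_mul]; ring
    have h2 : z.2 = w a * a.2 + w b * b.2 + w c * c.2 := by
      rw [← hz]; simp [Prod.snd_add, Prod.smul_snd, smul_eq_mul]; ring
    have hwa : w a = 1 - w b - w c := by linarith
    have e1 : det3 a b z = w c * det3 a b c := by
      unfold det3; rw [h1, h2, hwa]; ring
    have e2 : det3 b c z = w a * det3 a b c := by
      unfold det3; rw [h1, h2, hwa]; ring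
    have e3 : det3 c a z = w b * det3 a b c := by
      unfold det3; rw [h1, h2, hwa]; ring
    have ha' := hw0 a (by simp)
    have hb' := hw0 b (by simp)
    have hc' := hw0 c (by simp)
    refine ⟨?_, ?_, ?_⟩
    · rw [e1]; nlinarith [sq_nonneg (det3 a b c)]
    · rw [e2]; nlinarith [sq_nonneg (det3 a b c)]
    · rw [e3]; nlinarith [sq_nonneg (det3 a b c)]
  · rintro ⟨H1, H2, H3⟩
    have hDD : (0:ℝ) < det3 a b c * det3 a b c := mul_self_pos.mpr hD
    set α := det3 b c z / det3 a b c with hα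
    set β := det3 c a z / det3 a b c with hβ
    set γ := det3 a b z / det3 a b c with hγ
    have hα0 : 0 ≤ α := by
      have h := mul_div_mul_left (det3 b c z) (det3 a b c) hD
      rw [hα, ← h]; exact div_nonneg H2 hDD.le
    have hβ0 : 0 ≤ β := by
      have h := mul_div_mul_left (det3 c a z) (det3 a b c) hD
      rw [hβ, ← h]; exact div_nonneg H3 hDD.le
    have hγ0 : 0 ≤ γ := by
      have h := mul_div_mul_left (det3 a b z) (det3 a b c) hD
      rw [hγ, ← h]; exact div_nonneg H1 hDD.le
    have hsum : α + β + γ = 1 := by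
      rw [hα, hβ, hγ, ← add_div, ← add_div, det3_sum3, div_self hD]
    set w : Pt → ℝ := fun pt => if pt = a then α else if pt = b then β else γ with hwdef
    have hswsum : ∑ y ∈ ({a, b, c} : Finset Pt), w y = 1 := by
      rw [Finset.sum_insert (by simp [hab, hac]), Finset.sum_insert (by simp [hbc]),
        Finset.sum_singleton, hwdef]
      simp only [eq_self_iff_true, if_true, if_neg (Ne.symm hab), if_neg (Ne.symm hac), if_neg (Ne.symm hbc)]
      linarith [hsum]
    rw [Finset.convexHull_eq]
    refine ⟨w, ?_, hswsum, ?_⟩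
    · intro y hy
      simp only [Finset.mem_insert, Finset.mem_singleton] at hy
      rcases hy with rfl | rfl | rfl
      · rw [hwdef]; simpa using hα0
      · rw [hwdef]; simp only [if_neg (Ne.symm hab), if_pos rfl]; exact hβ0
      · rw [hwdef]; simp only [if_neg (Ne.symm hac), if_neg (Ne.symm hbc)]; exact hγ0
    · rw [Finset.centerMass_eq_of_sum_1 _ _ hswsum,
        Finset.sum_insert (by simp [hab, hac]), Finset.sum_insert (by simp [hbc]),
        Finset.sum_singleton, hwdef]
      simp only [id, eq_self_iff_true, if_true, if_neg (Ne.symm hab), if_neg (Ne.symm hac),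
        if_neg (Ne.symm hbc)]
      have c1 : (α • a + (β • b + γ • c)).1 = z.1 := by
        simp only [Prod.fst_add, Prod.smul_fst, smul_eq_mul]
        rw [hα, hβ, hγ]
        field_simp
        linarith [cramer1 a b c z]
      have c2 : (α • a + (β • b + γ • c)).2 = z.2 := by
        simp only [Prod.snd_add, Prod.smul_snd, smul_eq_mul]
        rw [hα, hβ, hγ]
        field_simp
        linarith [cramer2 a b c z]
      exact Prod.ext_iff.mpr ⟨c1, c2⟩

set_option maxHeartbeats 1000000 in
lemma convexPos_iff_prod (a b c d : Pt)
    (h1 : det3 a b c ≠ 0) (h2 : det3 a b d ≠ 0) (h3 : det3 a c d ≠ 0)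
    (h4 : det3 b c d ≠ 0) :
    ConvexPos {a, b, c, d} ↔
      0 < det3 a b c * det3 a b d * det3 a c d * det3 b c d := by
  have hab : a ≠ b := by rintro rfl; exact h1 (det3_self12 _ _)
  have hac : a ≠ c := by rintro rfl; exact h1 (det3_self13 _ _)
  have had : a ≠ d := by rintro rfl; exact h2 (det3_self13 _ _)
  have hbc : b ≠ c := by rintro rfl; exact h1 (det3_self23 _ _)
  have hbd : b ≠ d := by rintro rfl; exact h2 (det3_self23 _ _)
  have hcd : c ≠ d := by rintro rfl; exact h3 (det3_self23 _ _)
  have hiden : det3 a b c - det3 a b d + det3 a c d - det3 b c d = 0 := by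
    unfold det3; ring
  have hQa : ({a, b, c, d} : Finset Pt).erase a = {b, c, d} :=
    Finset.erase_insert (by simp [hab, hac, had])
  have hQb : ({a, b, c, d} : Finset Pt).erase b = {a, c, d} := by
    rw [Finset.erase_insert_of_ne hab, Finset.erase_insert (by simp [hbc, hbd])]
  have hQc : ({a, b, c, d} : Finset Pt).erase c = {a, b, d} := by
    rw [Finset.erase_insert_of_ne hac, Finset.erase_insert_of_ne hbc,
      Finset.erase_insert (by simp [hcd])]
  have hQd : ({a, b, c, d} : Finset Pt).erase d = {a, b, c} := by
    rw [Finset.erase_insert_of_ne had, Finset.erase_insert_of_ne hbd,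
      Finset.erase_insert_of_ne hcd, Finset.erase_singleton]
    simp
  have hcpiff : ConvexPos {a, b, c, d} ↔
      (a ∉ convexHull ℝ (↑({b, c, d} : Finset Pt) : Set Pt) ∧
       b ∉ convexHull ℝ (↑({a, c, d} : Finset Pt) : Set Pt) ∧
       c ∉ convexHull ℝ (↑({a, b, d} : Finset Pt) : Set Pt) ∧
       d ∉ convexHull ℝ (↑({a, b, c} : Finset Pt) : Set Pt)) := by
    constructor
    · intro h
      exact ⟨hQa ▸ h a (by simp), hQb ▸ h b (by simp), hQc ▸ h c (by simp),
        hQd ▸ h d (by simp)⟩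
    · rintro ⟨Ha, Hb, Hc, Hd⟩ x hx
      simp only [Finset.mem_insert, Finset.mem_singleton] at hx
      rcases hx with rfl | rfl | rfl | rfl
      · rwa [hQa]
      · rwa [hQb]
      · rwa [hQc]
      · rwa [hQd]
  rw [hcpiff, mem_hull3 b c d a h4, mem_hull3 a c d b h3, mem_hull3 a b d c h2,
    mem_hull3 a b c d h1]
  rw [det3_cycle a b c, det3_cycle a c d, det3_swap13 a b d, det3_swap23 a b c,
    det3_cycle b c d, det3_cycle' a b d, det3_swap23 b c d, det3_cycle' a c d,
    det3_swap12 a c d]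
  set D1 := det3 a b c with hD1
  set D2 := det3 a b d with hD2
  set D3 := det3 a c d with hD3
  set D4 := det3 b c d with hD4
  constructor
  · intro hcp
    have hpne : D1 * D2 * D3 * D4 ≠ 0 :=
      mul_ne_zero (mul_ne_zero (mul_ne_zero h1 h2) h3) h4
    by_contra hnp
    have hprod : D1 * D2 * D3 * D4 < 0 := lt_of_le_of_ne (not_lt.1 hnp) hpne
    rcases h1.lt_or_gt with k1 | k1 <;> rcases h2.lt_or_gt with k2 | k2 <;>
      rcases h3.lt_or_gt with k3 | k3 <;> rcases h4.lt_or_gt with k4 | k4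
    · -- ----
      have p1 : (0:ℝ) < -D1 := neg_pos.mpr k1
      have p2 : (0:ℝ) < -D2 := neg_pos.mpr k2
      have p3 : (0:ℝ) < -D3 := neg_pos.mpr k3
      have p4 : (0:ℝ) < -D4 := neg_pos.mpr k4
      have hpos : (0:ℝ) < D1 * D2 * D3 * D4 := by
        nlinarith [mul_pos (mul_pos p1 p2) (mul_pos p3 p4)]
      linarith
    · -- ---+
      have p1 : (0:ℝ) < -D1 := neg_pos.mpr k1
      have p2 : (0:ℝ) < -D2 := neg_pos.mpr k2
      have p3 : (0:ℝ) < -D3 := neg_pos.mpr k3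
      have p4 : (0:ℝ) < D4 := k4
      exact hcp.2.2.1 ⟨by nlinarith [mul_pos p2 p1], by nlinarith [mul_pos p2 p4],
        by nlinarith [mul_pos p2 p3]⟩
    · -- --+-
      have p1 : (0:ℝ) < -D1 := neg_pos.mpr k1
      have p2 : (0:ℝ) < -D2 := neg_pos.mpr k2
      have p3 : (0:ℝ) < D3 := k3
      have p4 : (0:ℝ) < -D4 := neg_pos.mpr k4
      exact hcp.2.2.2 ⟨by nlinarith [mul_pos p1 p2], by nlinarith [mul_pos p1 p4],
        by nlinarith [mul_pos p1 p3]⟩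
    · -- --++
      have p1 : (0:ℝ) < -D1 := neg_pos.mpr k1
      have p2 : (0:ℝ) < -D2 := neg_pos.mpr k2
      have p3 : (0:ℝ) < D3 := k3
      have p4 : (0:ℝ) < D4 := k4
      have hpos : (0:ℝ) < D1 * D2 * D3 * D4 := by
        nlinarith [mul_pos (mul_pos p1 p2) (mul_pos p3 p4)]
      linarith
    · -- -+--
      have p1 : (0:ℝ) < -D1 := neg_pos.mpr k1
      have p2 : (0:ℝ) < D2 := k2
      have p3 : (0:ℝ) < -D3 := neg_pos.mpr k3
      have p4 : (0:ℝ) < -D4 := neg_pos.mpr k4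
      exact hcp.1 ⟨by nlinarith [mul_pos p4 p1], by nlinarith [mul_pos p4 p3],
        by nlinarith [mul_pos p4 p2]⟩
    · -- -+-+
      have p1 : (0:ℝ) < -D1 := neg_pos.mpr k1
      have p2 : (0:ℝ) < D2 := k2
      have p3 : (0:ℝ) < -D3 := neg_pos.mpr k3
      have p4 : (0:ℝ) < D4 := k4
      have hpos : (0:ℝ) < D1 * D2 * D3 * D4 := by
        nlinarith [mul_pos (mul_pos p1 p2) (mul_pos p3 p4)]
      linarith
    · -- -++-
      have p1 : (0:ℝ) < -D1 := neg_pos.mpr k1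
      have p2 : (0:ℝ) < D2 := k2
      have p3 : (0:ℝ) < D3 := k3
      have p4 : (0:ℝ) < -D4 := neg_pos.mpr k4
      have hpos : (0:ℝ) < D1 * D2 * D3 * D4 := by
        nlinarith [mul_pos (mul_pos p1 p2) (mul_pos p3 p4)]
      linarith
    · -- -+++
      have p1 : (0:ℝ) < -D1 := neg_pos.mpr k1
      have p2 : (0:ℝ) < D2 := k2
      have p3 : (0:ℝ) < D3 := k3
      have p4 : (0:ℝ) < D4 := k4
      exact hcp.2.1 ⟨by nlinarith [mul_pos p3 p1], by nlinarith [mul_pos p3 p4],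
        by nlinarith [mul_pos p3 p2]⟩
    · -- +---
      have p1 : (0:ℝ) < D1 := k1
      have p2 : (0:ℝ) < -D2 := neg_pos.mpr k2
      have p3 : (0:ℝ) < -D3 := neg_pos.mpr k3
      have p4 : (0:ℝ) < -D4 := neg_pos.mpr k4
      exact hcp.2.1 ⟨by nlinarith [mul_pos p3 p1], by nlinarith [mul_pos p3 p4],
        by nlinarith [mul_pos p3 p2]⟩
    · -- +--+
      have p1 : (0:ℝ) < D1 := k1
      have p2 : (0:ℝ) < -D2 := neg_pos.mpr k2
      have p3 : (0:ℝ) < -D3 := neg_pos.mpr k3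
      have p4 : (0:ℝ) < D4 := k4
      have hpos : (0:ℝ) < D1 * D2 * D3 * D4 := by
        nlinarith [mul_pos (mul_pos p1 p2) (mul_pos p3 p4)]
      linarith
    · -- +-+-
      have p1 : (0:ℝ) < D1 := k1
      have p2 : (0:ℝ) < -D2 := neg_pos.mpr k2
      have p3 : (0:ℝ) < D3 := k3
      have p4 : (0:ℝ) < -D4 := neg_pos.mpr k4
      have hpos : (0:ℝ) < D1 * D2 * D3 * D4 := by
        nlinarith [mul_pos (mul_pos p1 p2) (mul_pos p3 p4)]
      linarith
    · -- +-++
      have p1 : (0:ℝ) < D1 := k1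
      have p2 : (0:ℝ) < -D2 := neg_pos.mpr k2
      have p3 : (0:ℝ) < D3 := k3
      have p4 : (0:ℝ) < D4 := k4
      exact hcp.1 ⟨by nlinarith [mul_pos p4 p1], by nlinarith [mul_pos p4 p3],
        by nlinarith [mul_pos p4 p2]⟩
    · -- ++--
      have p1 : (0:ℝ) < D1 := k1
      have p2 : (0:ℝ) < D2 := k2
      have p3 : (0:ℝ) < -D3 := neg_pos.mpr k3
      have p4 : (0:ℝ) < -D4 := neg_pos.mpr k4
      have hpos : (0:ℝ) < D1 * D2 * D3 * D4 := by
        nlinarith [mul_pos (mul_pos p1 p2) (mul_pos p3 p4)]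
      linarith
    · -- ++-+
      have p1 : (0:ℝ) < D1 := k1
      have p2 : (0:ℝ) < D2 := k2
      have p3 : (0:ℝ) < -D3 := neg_pos.mpr k3
      have p4 : (0:ℝ) < D4 := k4
      exact hcp.2.2.2 ⟨by nlinarith [mul_pos p1 p2], by nlinarith [mul_pos p1 p4],
        by nlinarith [mul_pos p1 p3]⟩
    · -- +++-
      have p1 : (0:ℝ) < D1 := k1
      have p2 : (0:ℝ) < D2 := k2
      have p3 : (0:ℝ) < D3 := k3
      have p4 : (0:ℝ) < -D4 := neg_pos.mpr k4
      exact hcp.2.2.1 ⟨by nlinarith [mul_pos p2 p1], by nlinarith [mul_pos p2 p4],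
        by nlinarith [mul_pos p2 p3]⟩
    · -- ++++
      have p1 : (0:ℝ) < D1 := k1
      have p2 : (0:ℝ) < D2 := k2
      have p3 : (0:ℝ) < D3 := k3
      have p4 : (0:ℝ) < D4 := k4
      have hpos : (0:ℝ) < D1 * D2 * D3 * D4 := by
        nlinarith [mul_pos (mul_pos p1 p2) (mul_pos p3 p4)]
      linarith
  · intro hp
    refine ⟨?_, ?_, ?_, ?_⟩ <;> rintro ⟨e1, e2, e3⟩
    · nlinarith [mul_nonneg (mul_nonneg e1 e2) e3, mul_pos hp (mul_self_pos.mpr h4)]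
    · nlinarith [mul_nonneg (mul_nonneg e1 e2) e3, mul_pos hp (mul_self_pos.mpr h3)]
    · nlinarith [mul_nonneg (mul_nonneg e1 e2) e3, mul_pos hp (mul_self_pos.mpr h2)]
    · nlinarith [mul_nonneg (mul_nonneg e1 e2) e3, mul_pos hp (mul_self_pos.mpr h1)]

lemma crossP_self (u : Pt) : crossP u u = 0 := by unfold crossP; ring

lemma crossP_zero_right (u : Pt) : crossP u 0 = 0 := by
  unfold crossP; simp

lemma crossP_add_right (u a b : Pt) : crossP u (a + b) = crossP u a + crossP u b := by
  obtain ⟨u1, u2⟩ := u; obtain ⟨a1, a2⟩ := a; obtain ⟨b1, b2⟩ := b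
  unfold crossP; simp only [Prod.fst_add, Prod.snd_add, Prod.mk_add_mk]; ring

lemma crossP_sub_right (u a b : Pt) : crossP u (a - b) = crossP u a - crossP u b := by
  obtain ⟨u1, u2⟩ := u; obtain ⟨a1, a2⟩ := a; obtain ⟨b1, b2⟩ := b
  unfold crossP; simp only [Prod.fst_sub, Prod.snd_sub]; ring

lemma crossP_smul_right (u : Pt) (s : ℝ) (a : Pt) : crossP u (s • a) = s * crossP u a := by
  obtain ⟨u1, u2⟩ := u; obtain ⟨a1, a2⟩ := a
  unfold crossP; simp only [Prod.smul_mk, smul_eq_mul]; ring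

lemma crossP_smul_left (s : ℝ) (a b : Pt) : crossP (s • a) b = s * crossP a b := by
  obtain ⟨a1, a2⟩ := a; obtain ⟨b1, b2⟩ := b
  unfold crossP; simp only [Prod.smul_mk, smul_eq_mul]; ring

lemma dotP_sub_right (u a b : Pt) : dotP u (a - b) = dotP u a - dotP u b := by
  obtain ⟨u1, u2⟩ := u; obtain ⟨a1, a2⟩ := a; obtain ⟨b1, b2⟩ := b
  unfold dotP; simp only [Prod.fst_sub, Prod.snd_sub]; ring

lemma dotP_smul_right (u : Pt) (s : ℝ) (a : Pt) : dotP u (s • a) = s * dotP u a := by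
  obtain ⟨u1, u2⟩ := u; obtain ⟨a1, a2⟩ := a
  unfold dotP; simp only [Prod.smul_mk, smul_eq_mul]; ring

/-- Jacobi-type identity in the plane. -/
lemma cross_dot_identity (v u w z : Pt) :
    crossP v u * dotP w z = crossP v z * dotP w u - crossP u z * dotP w v := by
  obtain ⟨v1, v2⟩ := v; obtain ⟨u1, u2⟩ := u; obtain ⟨w1, w2⟩ := w; obtain ⟨z1, z2⟩ := z
  unfold crossP dotP; ring

lemma prod_iff_pos {A1 B1 C1 D1 A2 B2 C2 D2 : ℝ} (hA : 0 < A1 * A2) (hB : 0 < B1 * B2)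
    (hC : 0 < C1 * C2) (hD : 0 < D1 * D2) :
    0 < A1 * B1 * C1 * D1 ↔ 0 < A2 * B2 * C2 * D2 := by
  have hbig : 0 < (A1 * B1 * C1 * D1) * (A2 * B2 * C2 * D2) := by
    have h := mul_pos (mul_pos (mul_pos hA hB) hC) hD
    nlinarith [h]
  constructor <;> intro h <;> nlinarith [hbig, h]

lemma prod_iff_neg {A1 B1 C1 D1 A2 B2 C2 D2 : ℝ} (hA : 0 < A1 * A2) (hB : 0 < B1 * B2)
    (hC : 0 < C1 * C2) (hD : D1 * D2 < 0) :
    0 < A2 * B2 * C2 * D2 ↔ ¬ 0 < A1 * B1 * C1 * D1 := by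
  have hbig : (A1 * B1 * C1 * D1) * (A2 * B2 * C2 * D2) < 0 := by
    have h := mul_pos (mul_pos hA hB) hC
    nlinarith [h, hD]
  have h1ne : A1 * B1 * C1 * D1 ≠ 0 := by
    intro h0; rw [h0, zero_mul] at hbig; exact lt_irrefl _ hbig
  constructor
  · intro h2 h1
    nlinarith [mul_pos h1 h2]
  · intro h1n
    have h1 : A1 * B1 * C1 * D1 < 0 := lt_of_le_of_ne (not_lt.1 h1n) h1ne
    nlinarith [hbig, h1]

lemma card_eq_four {α : Type*} [DecidableEq α] {s : Finset α} (h : s.card = 4) :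
    ∃ a b c d : α, a ≠ b ∧ a ≠ c ∧ a ≠ d ∧ b ≠ c ∧ b ≠ d ∧ c ≠ d ∧ s = {a, b, c, d} := by
  obtain ⟨a, t, hat, rfl, ht⟩ := Finset.card_eq_succ.1 h
  obtain ⟨b, c, d, hbc, hbd, hcd, rfl⟩ := Finset.card_eq_three.1 ht
  simp only [Finset.mem_insert, Finset.mem_singleton, not_or] at hat
  exact ⟨a, b, c, d, hat.1, hat.2.1, hat.2.2, hbc, hbd, hcd, rfl⟩

set_option maxHeartbeats 2000000 in
theorem main_aux (n : ℕ) (P : Fin n → Pt) (hinj : Function.Injective P) (i₀ : Fin n)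
    (v : Pt) (hray : HalvingRay ((univ : Finset (Fin n)).image P) (P i₀) v)
    (a b : ℝ) (ha : 0 ≤ a) (hab : a < b)
    (Pa Pb : Fin n → Pt)
    (hPa : Pa = fun i => if i = i₀ then P i₀ + a • v else P i)
    (hPb : Pb = fun i => if i = i₀ then P i₀ + b • v else P i)
    (hgpa : GenPosI Pa) (hgpb : GenPosI Pb)
    (jx jy : Fin n) (hxi : jx ≠ i₀) (hyi : jy ≠ i₀) (hxy : jx ≠ jy)
    (hneg : det3 (Pa i₀) (P jx) (P jy) * det3 (Pb i₀) (P jx) (P jy) < 0)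
    (hothers : ∀ l₁ l₂ l₃ : Fin n, l₁ ≠ l₂ → l₁ ≠ l₃ → l₂ ≠ l₃ →
      ({l₁, l₂, l₃} : Finset (Fin n)) ≠ ({i₀, jx, jy} : Finset (Fin n)) →
      0 < detI Pa l₁ l₂ l₃ * detI Pb l₁ l₂ l₃) :
    crI Pb < crI Pa := by
  obtain ⟨hv, havoid, hhalf, w, hw, hwv⟩ := hray
  have hPal : ∀ l : Fin n, l ≠ i₀ → Pa l = P l := by intro l h; rw [hPa]; simp [h]
  have hPbl : ∀ l : Fin n, l ≠ i₀ → Pb l = P l := by intro l h; rw [hPb]; simp [h]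
  have hPaz : Pa i₀ = P i₀ + a • v := by rw [hPa]; simp
  have hPbz : Pb i₀ = P i₀ + b • v := by rw [hPb]; simp
  have hSl : ∀ l : Fin n, P l ∈ (univ : Finset (Fin n)).image P :=
    fun l => Finset.mem_image_of_mem _ (Finset.mem_univ _)
  have hxp : P jx ≠ P i₀ := fun h => hxi (hinj h)
  have hyp : P jy ≠ P i₀ := fun h => hyi (hinj h)
  have hxyp : P jx ≠ P jy := fun h => hxy (hinj h)
  have havx : ∀ t : ℝ, P jx ≠ P i₀ + t • v := havoid _ (hSl jx) hxp
  have havy : ∀ t : ℝ, P jy ≠ P i₀ + t • v := havoid _ (hSl jy) hyp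
  have havl : ∀ l : Fin n, l ≠ i₀ → ∀ t : ℝ, P l ≠ P i₀ + t • v :=
    fun l hl => havoid _ (hSl l) (fun h => hl (hinj h))
  set c0 := det3 (P i₀) (P jx) (P jy) with hc0
  set c1 := crossP v (P jx - P jy) with hc1def
  have hfa : det3 (Pa i₀) (P jx) (P jy) = c0 + a * c1 := by
    rw [hPaz]; exact det3_affine _ v _ _ a
  have hfb : det3 (Pb i₀) (P jx) (P jy) = c0 + b * c1 := by
    rw [hPbz]; exact det3_affine _ v _ _ b
  have hneg' : (c0 + a * c1) * (c0 + b * c1) < 0 := by rw [← hfa, ← hfb]; exact hneg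
  have hc1 : c1 ≠ 0 := by intro h; rw [h] at hneg'; nlinarith [hneg', mul_self_nonneg c0]
  set ts := -c0 / c1 with hts_def
  have hts : c0 + ts * c1 = 0 := by rw [hts_def]; field_simp; ring
  have hfa2 : c0 + a * c1 = (a - ts) * c1 := by
    have : c0 = -(ts * c1) := by linarith
    rw [this]; ring
  have hfb2 : c0 + b * c1 = (b - ts) * c1 := by
    have : c0 = -(ts * c1) := by linarith
    rw [this]; ring
  have hats : a < ts ∧ ts < b := by
    rw [hfa2, hfb2] at hneg'
    constructor
    · by_contra hle; push_neg at hle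
      nlinarith [mul_nonneg (mul_nonneg (sub_nonneg.2 hle) (by linarith : (0:ℝ) ≤ b - ts))
        (mul_self_nonneg c1)]
    · by_contra hle; push_neg at hle
      nlinarith [mul_nonneg (mul_nonneg (by linarith : (0:ℝ) ≤ ts - a)
        (by linarith : (0:ℝ) ≤ ts - b)) (mul_self_nonneg c1)]
  have hts0 : 0 < ts := lt_of_le_of_lt ha hats.1
  set qs := P i₀ + ts • v with hqs
  set u := P jx - qs with hu
  have hxqs : P jx ≠ qs := by rw [hqs]; exact havx ts
  have hu0 : u ≠ 0 := by rw [hu]; exact sub_ne_zero.mpr hxqs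
  have hdqs : det3 qs (P jx) (P jy) = 0 := by
    rw [hqs, det3_affine, ← hc0, ← hc1def]; exact hts
  have hcol : crossP u (P jy - qs) = 0 := by
    rw [hu, ← det3_eq_cross]; exact hdqs
  obtain ⟨μ, hμ⟩ := cross_exists hcol hu0
  set e := crossP v u with he_def
  have he : e ≠ 0 := by
    intro h0
    obtain ⟨s, hs⟩ := cross_exists (show crossP v u = 0 from by rw [← he_def]; exact h0) hv
    apply havx (ts + s)
    have h1 : P jx = s • v + qs := sub_eq_iff_eq_add.1 (by rw [← hu]; exact hs)
    rw [hqs] at h1; rw [h1, add_smul]; abel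
  have hwx : dotP w (P jx - P i₀) ≤ 0 := hw _ (hSl jx)
  have hwy : dotP w (P jy - P i₀) ≤ 0 := hw _ (hSl jy)
  have hwl : ∀ l : Fin n, dotP w (P l - P i₀) ≤ 0 := fun l => hw _ (hSl l)
  have hwu : dotP w u < 0 := by
    have h1 : u = (P jx - P i₀) - ts • v := by rw [hu, hqs]; abel
    rw [h1, dotP_sub_right, dotP_smul_right]
    nlinarith [hwx, hwv, hts0]
  have hwyq : dotP w (P jy - qs) < 0 := by
    have h1 : P jy - qs = (P jy - P i₀) - ts • v := by rw [hqs]; abel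
    rw [h1, dotP_sub_right, dotP_smul_right]
    nlinarith [hwy, hwv, hts0]
  have hμ0 : 0 < μ := by
    have h2 : dotP w (P jy - qs) = μ * dotP w u := by rw [hμ, dotP_smul_right]
    nlinarith [hwyq, hwu, h2]
  have hμ1 : μ ≠ 1 := by
    intro h1; apply hxyp
    rw [h1, one_smul, hu] at hμ
    exact (sub_left_inj.1 hμ).symm
  have hc1e : c1 = (1 - μ) * e := by
    have hxmy : P jx - P jy = (1 - μ) • u := by
      rw [sub_smul, one_smul, ← hμ, hu]; abel
    rw [hc1def, hxmy, crossP_smul_right, ← he_def]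
  set T : Finset (Fin n) := {i₀, jx, jy} with hT
  have hTcard : T.card = 3 := by
    rw [hT, Finset.card_insert_of_notMem (by simp [Ne.symm hxi, Ne.symm hyi]),
      Finset.card_insert_of_notMem (by simp [hxy]), Finset.card_singleton]
  set Z : Finset (Fin n) := univ \ T with hZ
  have hmemZ : ∀ l : Fin n, l ∈ Z ↔ l ≠ i₀ ∧ l ≠ jx ∧ l ≠ jy := by
    intro l; rw [hZ, hT]; simp [not_or]
  have hKey : ∀ l ∈ Z,
      (ConvexPos ((insert l T).image Pa) ↔
        0 < det3 (P l) (Pa i₀) (P jx) * det3 (P l) (Pa i₀) (P jy) *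
            det3 (P l) (P jx) (P jy) * det3 (Pa i₀) (P jx) (P jy)) ∧
      (ConvexPos ((insert l T).image Pb) ↔ ¬ ConvexPos ((insert l T).image Pa)) ∧
      (¬ ConvexPos ((insert l T).image Pa) → 0 < e * crossP v (P l - P i₀)) := by
    intro l hl
    obtain ⟨hl1, hl2, hl3⟩ := (hmemZ l).1 hl
    have hTne : ∀ l₁ l₂ l₃ : Fin n, l ∈ ({l₁, l₂, l₃} : Finset (Fin n)) →
        ({l₁, l₂, l₃} : Finset (Fin n)) ≠ ({i₀, jx, jy} : Finset (Fin n)) := by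
      intro l₁ l₂ l₃ hmem hEq
      rw [hEq] at hmem
      simp only [Finset.mem_insert, Finset.mem_singleton] at hmem
      rcases hmem with h | h | h
      exacts [hl1 h, hl2 h, hl3 h]
    have hA := hothers l i₀ jx hl1 hl2 (Ne.symm hxi) (hTne _ _ _ (by simp))
    have hB := hothers l i₀ jy hl1 hl3 (Ne.symm hyi) (hTne _ _ _ (by simp))
    simp only [detI, hPal l hl1, hPbl l hl1, hPal jx hxi, hPbl jx hxi, hPal jy hyi,
      hPbl jy hyi] at hA hB
    have hC0 : det3 (P l) (P jx) (P jy) ≠ 0 := by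
      have h := hgpa l jx jy hl2 hl3 hxy
      simpa [detI, hPal l hl1, hPal jx hxi, hPal jy hyi] using h
    have hC : 0 < det3 (P l) (P jx) (P jy) * det3 (P l) (P jx) (P jy) := mul_self_pos.mpr hC0
    have d1a : det3 (P l) (Pa i₀) (P jx) ≠ 0 := by
      have h := hgpa l i₀ jx hl1 hl2 (Ne.symm hxi)
      simpa [detI, hPal l hl1, hPal jx hxi] using h
    have d2a : det3 (P l) (Pa i₀) (P jy) ≠ 0 := by
      have h := hgpa l i₀ jy hl1 hl3 (Ne.symm hyi)
      simpa [detI, hPal l hl1, hPal jy hyi] using h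
    have d4a : det3 (Pa i₀) (P jx) (P jy) ≠ 0 := by
      have h := hgpa i₀ jx jy (Ne.symm hxi) (Ne.symm hyi) hxy
      simpa [detI, hPal jx hxi, hPal jy hyi] using h
    have d1b : det3 (P l) (Pb i₀) (P jx) ≠ 0 := by
      have h := hgpb l i₀ jx hl1 hl2 (Ne.symm hxi)
      simpa [detI, hPbl l hl1, hPbl jx hxi] using h
    have d2b : det3 (P l) (Pb i₀) (P jy) ≠ 0 := by
      have h := hgpb l i₀ jy hl1 hl3 (Ne.symm hyi)
      simpa [detI, hPbl l hl1, hPbl jy hyi] using h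
    have d4b : det3 (Pb i₀) (P jx) (P jy) ≠ 0 := by
      have h := hgpb i₀ jx jy (Ne.symm hxi) (Ne.symm hyi) hxy
      simpa [detI, hPbl jx hxi, hPbl jy hyi] using h
    have himga : (insert l T).image Pa = {P l, Pa i₀, P jx, P jy} := by
      rw [hT]
      simp [Finset.image_insert, Finset.image_singleton, hPal l hl1, hPal jx hxi, hPal jy hyi]
    have himgb : (insert l T).image Pb = {P l, Pb i₀, P jx, P jy} := by
      rw [hT]
      simp [Finset.image_insert, Finset.image_singleton, hPbl l hl1, hPbl jx hxi, hPbl jy hyi]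
    have hcrita : ConvexPos ((insert l T).image Pa) ↔
        0 < det3 (P l) (Pa i₀) (P jx) * det3 (P l) (Pa i₀) (P jy) *
            det3 (P l) (P jx) (P jy) * det3 (Pa i₀) (P jx) (P jy) := by
      rw [himga]; exact convexPos_iff_prod _ _ _ _ d1a d2a hC0 d4a
    have hcritb : ConvexPos ((insert l T).image Pb) ↔
        0 < det3 (P l) (Pb i₀) (P jx) * det3 (P l) (Pb i₀) (P jy) *
            det3 (P l) (P jx) (P jy) * det3 (Pb i₀) (P jx) (P jy) := by
      rw [himgb]; exact convexPos_iff_prod _ _ _ _ d1b d2b hC0 d4b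
    refine ⟨hcrita, ?_, ?_⟩
    · rw [hcritb, hcrita]
      exact prod_iff_neg hA hB hC hneg
    · intro hnc
      have hPIne : det3 (P l) (Pa i₀) (P jx) * det3 (P l) (Pa i₀) (P jy) *
          det3 (P l) (P jx) (P jy) * det3 (Pa i₀) (P jx) (P jy) ≠ 0 :=
        mul_ne_zero (mul_ne_zero (mul_ne_zero d1a d2a) hC0) d4a
      have hp1 : det3 (P l) (Pa i₀) (P jx) * det3 (P l) (Pa i₀) (P jy) *
          det3 (P l) (P jx) (P jy) * det3 (Pa i₀) (P jx) (P jy) < 0 :=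
        lt_of_le_of_ne (not_lt.1 (fun h => hnc (hcrita.mpr h))) hPIne
      have hga : det3 (Pa i₀) (P jx) (P l) =
          det3 (P i₀) (P jx) (P l) + a * crossP v (P jx - P l) := by
        rw [hPaz]; exact det3_affine _ v _ _ a
      have hgb : det3 (Pb i₀) (P jx) (P l) =
          det3 (P i₀) (P jx) (P l) + b * crossP v (P jx - P l) := by
        rw [hPbz]; exact det3_affine _ v _ _ b
      have hgs : det3 qs (P jx) (P l) =
          det3 (P i₀) (P jx) (P l) + ts * crossP v (P jx - P l) := by
        rw [hqs]; exact det3_affine _ v _ _ ts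
      have hprodx : 0 < (det3 (P i₀) (P jx) (P l) + a * crossP v (P jx - P l)) *
          (det3 (P i₀) (P jx) (P l) + b * crossP v (P jx - P l)) := by
        have h := hothers i₀ jx l (Ne.symm hxi) (Ne.symm hl1) (Ne.symm hl2)
          (hTne _ _ _ (by simp))
        simp only [detI, hPal jx hxi, hPbl jx hxi, hPal l hl1, hPbl l hl1] at h
        rw [hga, hgb] at h; exact h
      have htrx : 0 < det3 (Pa i₀) (P jx) (P l) * det3 qs (P jx) (P l) := by
        rw [hga, hgs]
        exact affine_sign _ _ a b ts hats.1.le hats.2.le hprodx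
      have hgay : det3 (Pa i₀) (P jy) (P l) =
          det3 (P i₀) (P jy) (P l) + a * crossP v (P jy - P l) := by
        rw [hPaz]; exact det3_affine _ v _ _ a
      have hgby : det3 (Pb i₀) (P jy) (P l) =
          det3 (P i₀) (P jy) (P l) + b * crossP v (P jy - P l) := by
        rw [hPbz]; exact det3_affine _ v _ _ b
      have hgsy : det3 qs (P jy) (P l) =
          det3 (P i₀) (P jy) (P l) + ts * crossP v (P jy - P l) := by
        rw [hqs]; exact det3_affine _ v _ _ ts
      have hprody : 0 < (det3 (P i₀) (P jy) (P l) + a * crossP v (P jy - P l)) *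
          (det3 (P i₀) (P jy) (P l) + b * crossP v (P jy - P l)) := by
        have h := hothers i₀ jy l (Ne.symm hyi) (Ne.symm hl1) (Ne.symm hl3)
          (hTne _ _ _ (by simp))
        simp only [detI, hPal jy hyi, hPbl jy hyi, hPal l hl1, hPbl l hl1] at h
        rw [hgay, hgby] at h; exact h
      have htry : 0 < det3 (Pa i₀) (P jy) (P l) * det3 qs (P jy) (P l) := by
        rw [hgay, hgsy]
        exact affine_sign _ _ a b ts hats.1.le hats.2.le hprody
      have hqsx : det3 qs (P jx) (P l) = crossP u (P l - qs) := by
        rw [det3_eq_cross, ← hu]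
      have hqsy : det3 qs (P jy) (P l) = μ * crossP u (P l - qs) := by
        rw [det3_eq_cross, hμ, crossP_smul_left]
      have hAX : 0 < det3 (Pa i₀) (P jx) (P l) * crossP u (P l - qs) := by
        rw [← hqsx]; exact htrx
      have hBY : 0 < det3 (Pa i₀) (P jy) (P l) * (μ * crossP u (P l - qs)) := by
        rw [← hqsy]; exact htry
      have hX0 : crossP u (P l - qs) ≠ 0 := by
        intro h0; rw [h0, mul_zero] at hAX; exact lt_irrefl _ hAX
      have hCX : det3 (P jx) (P jy) (P l) = (μ - 1) * crossP u (P l - qs) := by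
        rw [det3_eq_cross]
        have h1 : P jy - P jx = (μ - 1) • u := by rw [sub_smul, one_smul, ← hμ, hu]; abel
        have h2 : P l - P jx = (P l - qs) - u := by rw [hu]; abel
        rw [h1, h2, crossP_smul_left, crossP_sub_right, crossP_self]; ring
      have hDa : det3 (Pa i₀) (P jx) (P jy) = (a - ts) * ((1 - μ) * e) := by
        have hc0e : c0 = -(ts * ((1 - μ) * e)) := by rw [← hc1e]; linarith
        rw [hfa, hc1e, hc0e]; ring
      rw [det3_cycle' (Pa i₀) (P jx) (P l), det3_cycle' (Pa i₀) (P jy) (P l),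
        det3_cycle' (P jx) (P jy) (P l), hCX, hDa] at hp1
      set X := crossP u (P l - qs) with hXdef
      set A := det3 (Pa i₀) (P jx) (P l) with hAdef
      set B := det3 (Pa i₀) (P jy) (P l) with hBdef
      have hBX : 0 < B * X := by
        have h9 : 0 < μ⁻¹ * (B * (μ * X)) := mul_pos (inv_pos.2 hμ0) hBY
        rwa [show μ⁻¹ * (B * (μ * X)) = (μ⁻¹ * μ) * (B * X) from by ring,
          inv_mul_cancel₀ (ne_of_gt hμ0), one_mul] at h9
      have hXX : (0:ℝ) < X * X := mul_self_pos.mpr hX0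
      have hAB : 0 < A * B := by
        have h1 : 0 < (A * B) * (X * X) := by
          have h2 := mul_pos hAX hBX
          rwa [show (A * X) * (B * X) = (A * B) * (X * X) from by ring] at h2
        have h3 := mul_pos h1 (inv_pos.2 hXX)
        rwa [show ((A * B) * (X * X)) * (X * X)⁻¹ = (A * B) * ((X * X) * (X * X)⁻¹) from by
          ring, mul_inv_cancel₀ (ne_of_gt hXX), mul_one] at h3
      have hμsq : 0 < (μ - 1) * (μ - 1) := mul_self_pos.mpr (sub_ne_zero.mpr hμ1)
      have hKpos : 0 < A * B * ((μ - 1) * (μ - 1)) * (ts - a) :=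
        mul_pos (mul_pos hAB hμsq) (by linarith [hats.1])
      have hEX : e * X < 0 := by
        rw [show A * B * ((μ - 1) * X) * ((a - ts) * ((1 - μ) * e))
            = (A * B * ((μ - 1) * (μ - 1)) * (ts - a)) * (e * X) from by ring] at hp1
        by_contra hng
        push_neg at hng
        exact absurd hp1 (not_lt.2 (mul_nonneg hKpos.le hng))
      have hwz : dotP w (P l - qs) < 0 := by
        have h1 : P l - qs = (P l - P i₀) - ts • v := by rw [hqs]; abel
        rw [h1, dotP_sub_right, dotP_smul_right]
        linarith only [hwl l, mul_pos hts0 hwv]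
      have hid := cross_dot_identity v u w (P l - qs)
      rw [← he_def, ← hXdef] at hid
      have hid2 : (e * e) * dotP w (P l - qs) =
          (e * crossP v (P l - qs)) * dotP w u - (e * X) * dotP w v := by
        linear_combination e * hid
      have hfinal : 0 < e * crossP v (P l - qs) := by
        by_contra hng
        push_neg at hng
        have t1 : 0 ≤ (e * crossP v (P l - qs)) * dotP w u := by
          rw [show (e * crossP v (P l - qs)) * dotP w u
              = (-(e * crossP v (P l - qs))) * (-(dotP w u)) from by ring]
          exact mul_nonneg (neg_nonneg.2 hng) (neg_nonneg.2 hwu.le)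
        have t2 : 0 < -((e * X) * dotP w v) := by
          rw [show -((e * X) * dotP w v) = (-(e * X)) * dotP w v from by ring]
          exact mul_pos (neg_pos.2 hEX) hwv
        have t3 : (e * e) * dotP w (P l - qs) < 0 :=
          mul_neg_of_pos_of_neg (mul_self_pos.mpr he) hwz
        linarith only [hid2, t1, t2, t3]
      have hvz : crossP v (P l - qs) = crossP v (P l - P i₀) := by
        have h1 : P l - qs = (P l - P i₀) - ts • v := by rw [hqs]; abel
        rw [h1, crossP_sub_right, crossP_smul_right, crossP_self]; ring
      rw [hvz] at hfinal; exact hfinal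
  set G := univ.filter (fun l : Fin n => 0 < e * crossP v (P l - P i₀)) with hG
  have hScard : ((univ : Finset (Fin n)).image P).card = n := by
    rw [Finset.card_image_of_injective _ hinj, Finset.card_univ, Fintype.card_fin]
  set pos := univ.filter (fun l : Fin n => 0 < crossP v (P l - P i₀)) with hpos
  set neg := univ.filter (fun l : Fin n => crossP v (P l - P i₀) < 0) with hneg2
  have hposcard : pos.card = (n - 1) / 2 ∨ pos.card = (n - 1) - (n - 1) / 2 := by
    have himg : ((univ : Finset (Fin n)).image P).filter (fun z => 0 < crossP v (z - P i₀))
        = pos.image P := by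
      rw [Finset.filter_image, hpos]
    have hcard2 : (((univ : Finset (Fin n)).image P).filter
        (fun z => 0 < crossP v (z - P i₀))).card = pos.card := by
      rw [himg, Finset.card_image_of_injective _ hinj]
    rw [hScard, hcard2] at hhalf
    exact hhalf
  have hzero : ∀ l : Fin n, l ≠ i₀ → crossP v (P l - P i₀) ≠ 0 := by
    intro l hl h0
    obtain ⟨s, hs⟩ := cross_exists h0 hv
    have h1 := sub_eq_iff_eq_add.1 hs
    rw [add_comm] at h1
    exact havl l hl s h1
  have hcount : pos.card + (neg.card + 1) = n := by
    set mid := univ.filter (fun l : Fin n => ¬ 0 < crossP v (P l - P i₀)) with hmid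
    have h1 : pos.card + mid.card = n := by
      rw [hpos, hmid]
      have h := Finset.card_filter_add_card_filter_not
        (s := (univ : Finset (Fin n))) (p := fun l => 0 < crossP v (P l - P i₀))
      rw [Finset.card_univ, Fintype.card_fin] at h
      exact h
    have h2 := Finset.card_filter_add_card_filter_not
      (s := mid) (p := fun l => crossP v (P l - P i₀) < 0)
    rw [hmid, Finset.filter_filter, Finset.filter_filter] at h2
    have h3 : (univ.filter fun l : Fin n =>
        (¬ 0 < crossP v (P l - P i₀)) ∧ crossP v (P l - P i₀) < 0) = neg := by
      rw [hneg2]; apply Finset.filter_congr; intro l _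
      constructor
      · exact fun h => h.2
      · exact fun h => ⟨by linarith only [h], h⟩
    have h4 : (univ.filter fun l : Fin n =>
        (¬ 0 < crossP v (P l - P i₀)) ∧ ¬ crossP v (P l - P i₀) < 0) = {i₀} := by
      ext l
      simp only [Finset.mem_filter, Finset.mem_univ, true_and, Finset.mem_singleton, not_lt]
      constructor
      · rintro ⟨hn1, hn2⟩
        by_contra hne
        exact hzero l hne (le_antisymm hn1 hn2)
      · rintro rfl
        rw [sub_self, crossP_zero_right]
        exact ⟨le_refl 0, le_refl 0⟩
    rw [h3, h4, Finset.card_singleton, ← hmid] at h2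
    omega
  have hGcard : G.card = pos.card ∨ G.card = neg.card := by
    rcases he.lt_or_gt with h | h
    · right
      rw [hG, hneg2]
      congr 1
      apply Finset.filter_congr; intro l _
      constructor
      · intro h1
        by_contra h2
        push_neg at h2
        have h5 : 0 ≤ (-e) * crossP v (P l - P i₀) :=
          mul_nonneg (neg_nonneg.2 h.le) h2
        linarith only [h1, h5]
      · intro h1
        exact mul_pos_of_neg_of_neg h h1
    · left
      rw [hG, hpos]
      congr 1
      apply Finset.filter_congr; intro l _
      constructor
      · intro h1
        by_contra h2
        push_neg at h2
        have h5 : 0 ≤ e * (-(crossP v (P l - P i₀))) :=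
          mul_nonneg h.le (neg_nonneg.2 h2)
        linarith only [h1, h5]
      · intro h1
        exact mul_pos h h1
  have hGx : jx ∈ G := by
    rw [hG, Finset.mem_filter]
    refine ⟨Finset.mem_univ _, ?_⟩
    have h2 : P jx - P i₀ = u + ts • v := by rw [hu, hqs]; abel
    have h1 : crossP v (P jx - P i₀) = e := by
      rw [h2, crossP_add_right, crossP_smul_right, crossP_self, ← he_def]; ring
    rw [h1]; exact mul_self_pos.mpr he
  have hGy : jy ∈ G := by
    rw [hG, Finset.mem_filter]
    refine ⟨Finset.mem_univ _, ?_⟩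
    have h2 : P jy - P i₀ = (P jy - qs) + ts • v := by rw [hqs]; abel
    have h1 : crossP v (P jy - P i₀) = μ * e := by
      rw [h2, crossP_add_right, hμ, crossP_smul_right, crossP_smul_right, crossP_self,
        ← he_def]; ring
    rw [h1, show e * (μ * e) = μ * (e * e) from by ring]
    exact mul_pos hμ0 (mul_self_pos.mpr he)
  set NaS := Z.filter (fun l => ¬ ConvexPos ((insert l T).image Pa)) with hNaS
  have hsubG : NaS ⊆ G := by
    intro l hl
    rw [hNaS, Finset.mem_filter] at hl
    rw [hG, Finset.mem_filter]
    exact ⟨Finset.mem_univ _, ((hKey l hl.1).2.2 hl.2)⟩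
  have hyNaS : jy ∉ NaS := by
    rw [hNaS, Finset.mem_filter]
    rintro ⟨hmem, -⟩
    exact ((hmemZ jy).1 hmem).2.2 rfl
  have hxins : jx ∉ insert jy NaS := by
    simp only [Finset.mem_insert]
    rintro (h | h)
    · exact hxy h
    · rw [hNaS, Finset.mem_filter] at h
      exact ((hmemZ jx).1 h.1).2.1 rfl
  have hcard2 : NaS.card + 2 ≤ G.card := by
    have hsub2 : insert jx (insert jy NaS) ⊆ G := by
      intro k hk
      simp only [Finset.mem_insert] at hk
      rcases hk with rfl | rfl | hk
      · exact hGx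
      · exact hGy
      · exact hsubG hk
    have h5 : (insert jx (insert jy NaS)).card = NaS.card + 2 := by
      rw [Finset.card_insert_of_notMem hxins, Finset.card_insert_of_notMem hyNaS]
    calc NaS.card + 2 = (insert jx (insert jy NaS)).card := h5.symm
      _ ≤ G.card := Finset.card_le_card hsub2
  have hNaCa := Finset.card_filter_add_card_filter_not
    (s := Z) (p := fun l => ConvexPos ((insert l T).image Pa))
  have hZcard : Z.card = n - 3 := by
    rw [hZ, Finset.card_sdiff_of_subset (Finset.subset_univ _), hTcard, Finset.card_univ,
      Fintype.card_fin]
  have hsplit : ∀ Pc : Fin n → Pt,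
      crI Pc = (((univ : Finset (Fin n)).powersetCard 4).filter
          (fun Q => ConvexPos (Q.image Pc) ∧ T ⊆ Q)).card +
        (((univ : Finset (Fin n)).powersetCard 4).filter
          (fun Q => ConvexPos (Q.image Pc) ∧ ¬ T ⊆ Q)).card := by
    intro Pc
    have base := Finset.card_filter_add_card_filter_not
      (s := ((univ : Finset (Fin n)).powersetCard 4).filter
        (fun Q => ConvexPos (Q.image Pc)))
      (p := fun Q => T ⊆ Q)
    rw [Finset.filter_filter, Finset.filter_filter] at base
    exact base.symm
  have hTpart : ∀ Pc : Fin n → Pt,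
      (((univ : Finset (Fin n)).powersetCard 4).filter
        (fun Q => ConvexPos (Q.image Pc) ∧ T ⊆ Q))
      = (Z.filter (fun l => ConvexPos ((insert l T).image Pc))).image
          (fun l => insert l T) := by
    intro Pc
    ext Q
    simp only [Finset.mem_filter, Finset.mem_powersetCard, Finset.mem_image]
    constructor
    · rintro ⟨⟨hQsub, hQcard⟩, hconv, hTQ⟩
      have hsd : (Q \ T).card = 1 := by
        rw [Finset.card_sdiff_of_subset hTQ, hQcard, hTcard]
      obtain ⟨l, hleq⟩ := Finset.card_eq_one.1 hsd
      have hlQ : l ∈ Q \ T := by rw [hleq]; exact Finset.mem_singleton_self l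
      rw [Finset.mem_sdiff] at hlQ
      have hQeq : Q = insert l T := by
        apply Finset.Subset.antisymm
        · intro k hk
          by_cases hkT : k ∈ T
          · exact Finset.mem_insert_of_mem hkT
          · have hks : k ∈ Q \ T := Finset.mem_sdiff.2 ⟨hk, hkT⟩
            rw [hleq, Finset.mem_singleton] at hks
            rw [hks]; exact Finset.mem_insert_self _ _
        · intro k hk
          rcases Finset.mem_insert.1 hk with rfl | hkT
          · exact hlQ.1
          · exact hTQ hkT
      refine ⟨l, ⟨?_, ?_⟩, hQeq.symm⟩
      · rw [hZ, Finset.mem_sdiff]; exact ⟨Finset.mem_univ _, hlQ.2⟩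
      · rw [← hQeq]; exact hconv
    · rintro ⟨l, hl, rfl⟩
      have hlZ := (hmemZ l).1 hl.1
      have hlT : l ∉ T := by
        rw [hT]; simp [hlZ.1, hlZ.2.1, hlZ.2.2]
      refine ⟨⟨Finset.subset_univ _, ?_⟩, hl.2, Finset.subset_insert _ _⟩
      rw [Finset.card_insert_of_notMem hlT, hTcard]
  have hinjT : ∀ Pc : Fin n → Pt,
      ((Z.filter (fun l => ConvexPos ((insert l T).image Pc))).image
        (fun l => insert l T)).card
      = (Z.filter (fun l => ConvexPos ((insert l T).image Pc))).card := by
    intro Pc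
    apply Finset.card_image_of_injOn
    intro l1 h1 l2 h2 hEq
    have hEq' : insert l1 T = insert l2 T := hEq
    have hl1Z := (hmemZ l1).1 (Finset.mem_filter.1 h1).1
    have hl1T : l1 ∉ T := by
      rw [hT]; simp [hl1Z.1, hl1Z.2.1, hl1Z.2.2]
    have hmm : l1 ∈ insert l2 T := by
      rw [← hEq']; exact Finset.mem_insert_self _ _
    rcases Finset.mem_insert.1 hmm with h | h
    · exact h
    · exact absurd h hl1T
  have hInv : ∀ Q ∈ ((univ : Finset (Fin n)).powersetCard 4), ¬ T ⊆ Q →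
      (ConvexPos (Q.image Pa) ↔ ConvexPos (Q.image Pb)) := by
    intro Q hQ hnT
    rw [Finset.mem_powersetCard] at hQ
    obtain ⟨l1, l2, l3, l4, h12, h13, h14, h23, h24, h34, rfl⟩ := card_eq_four hQ.2
    have hmem : ∀ la lb lc : Fin n, la ∈ ({l1, l2, l3, l4} : Finset (Fin n)) →
        lb ∈ ({l1, l2, l3, l4} : Finset (Fin n)) →
        lc ∈ ({l1, l2, l3, l4} : Finset (Fin n)) →
        ({la, lb, lc} : Finset (Fin n)) ≠ T := by
      intro la lb lc hla hlb hlc hEq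
      apply hnT
      rw [← hEq]
      exact Finset.insert_subset_iff.2 ⟨hla, Finset.insert_subset_iff.2
        ⟨hlb, Finset.singleton_subset_iff.2 hlc⟩⟩
    have hA := hothers l1 l2 l3 h12 h13 h23 (hmem _ _ _ (by simp) (by simp) (by simp))
    have hB := hothers l1 l2 l4 h12 h14 h24 (hmem _ _ _ (by simp) (by simp) (by simp))
    have hC := hothers l1 l3 l4 h13 h14 h34 (hmem _ _ _ (by simp) (by simp) (by simp))
    have hD := hothers l2 l3 l4 h23 h24 h34 (hmem _ _ _ (by simp) (by simp) (by simp))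
    simp only [detI] at hA hB hC hD
    have himga : ({l1, l2, l3, l4} : Finset (Fin n)).image Pa
        = {Pa l1, Pa l2, Pa l3, Pa l4} := by
      simp [Finset.image_insert, Finset.image_singleton]
    have himgb : ({l1, l2, l3, l4} : Finset (Fin n)).image Pb
        = {Pb l1, Pb l2, Pb l3, Pb l4} := by
      simp [Finset.image_insert, Finset.image_singleton]
    have g1a := hgpa l1 l2 l3 h12 h13 h23
    have g2a := hgpa l1 l2 l4 h12 h14 h24
    have g3a := hgpa l1 l3 l4 h13 h14 h34
    have g4a := hgpa l2 l3 l4 h23 h24 h34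
    have g1b := hgpb l1 l2 l3 h12 h13 h23
    have g2b := hgpb l1 l2 l4 h12 h14 h24
    have g3b := hgpb l1 l3 l4 h13 h14 h34
    have g4b := hgpb l2 l3 l4 h23 h24 h34
    simp only [detI] at g1a g2a g3a g4a g1b g2b g3b g4b
    rw [himga, himgb, convexPos_iff_prod _ _ _ _ g1a g2a g3a g4a,
      convexPos_iff_prod _ _ _ _ g1b g2b g3b g4b]
    exact prod_iff_pos hA hB hC hD
  have hRest : (((univ : Finset (Fin n)).powersetCard 4).filter
        (fun Q => ConvexPos (Q.image Pa) ∧ ¬ T ⊆ Q))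
      = (((univ : Finset (Fin n)).powersetCard 4).filter
        (fun Q => ConvexPos (Q.image Pb) ∧ ¬ T ⊆ Q)) := by
    apply Finset.filter_congr
    intro Q hQ
    constructor
    · rintro ⟨h1, h2⟩; exact ⟨(hInv Q hQ h2).1 h1, h2⟩
    · rintro ⟨h1, h2⟩; exact ⟨(hInv Q hQ h2).2 h1, h2⟩
  have hfiltb : Z.filter (fun l => ConvexPos ((insert l T).image Pb)) =
      Z.filter (fun l => ¬ ConvexPos ((insert l T).image Pa)) := by
    apply Finset.filter_congr
    intro l hl
    exact (hKey l hl).2.1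
  have hcra : crI Pa = (Z.filter (fun l => ConvexPos ((insert l T).image Pa))).card +
      (((univ : Finset (Fin n)).powersetCard 4).filter
        (fun Q => ConvexPos (Q.image Pa) ∧ ¬ T ⊆ Q)).card := by
    rw [hsplit Pa, hTpart Pa, hinjT Pa]
  have hcrb : crI Pb = NaS.card +
      (((univ : Finset (Fin n)).powersetCard 4).filter
        (fun Q => ConvexPos (Q.image Pa) ∧ ¬ T ⊆ Q)).card := by
    rw [hsplit Pb, hTpart Pb, hinjT Pb, hfiltb, ← hNaS, ← hRest]
  have hNaCaeq : (Z.filter (fun l => ConvexPos ((insert l T).image Pa))).card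
      + NaS.card = Z.card := by
    rw [hNaS]; exact hNaCa
  rw [hcra, hcrb]
  have hfin : NaS.card < (Z.filter (fun l => ConvexPos ((insert l T).image Pa))).card := by
    rcases hGcard with h | h <;> rcases hposcard with h' | h' <;> omega
  omega

/-- if an extreme point `P i₀` of the configuration is moved along a
halving ray for it (oriented away from the set), then every mutation occurring
during this motion strictly decreases the number of crossings.  `Pa` and `Pb` are
the configurations at two times `0 ≤ a < b` of the motion, between which exactly
one triple reverses its orientation (a mutation). -/
theorem statement1 (n : ℕ) (P : Fin n → Pt) (hinj : Function.Injective P)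
    (hgp : GenPosI P) (i₀ : Fin n)
    (hext : P i₀ ∉ convexHull ℝ (P '' {i | i ≠ i₀}))
    (v : Pt) (hray : HalvingRay ((univ : Finset (Fin n)).image P) (P i₀) v)
    (a b : ℝ) (ha : 0 ≤ a) (hab : a < b)
    (Pa Pb : Fin n → Pt)
    (hPa : Pa = fun i => if i = i₀ then P i₀ + a • v else P i)
    (hPb : Pb = fun i => if i = i₀ then P i₀ + b • v else P i)
    (hgpa : GenPosI Pa) (hgpb : GenPosI Pb)
    (hmut : ∃ j₁ j₂ j₃ : Fin n, j₁ ≠ j₂ ∧ j₁ ≠ j₃ ∧ j₂ ≠ j₃ ∧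
      detI Pa j₁ j₂ j₃ * detI Pb j₁ j₂ j₃ < 0 ∧
      ∀ l₁ l₂ l₃ : Fin n, l₁ ≠ l₂ → l₁ ≠ l₃ → l₂ ≠ l₃ →
        ({l₁, l₂, l₃} : Finset (Fin n)) ≠ ({j₁, j₂, j₃} : Finset (Fin n)) →
        0 < detI Pa l₁ l₂ l₃ * detI Pb l₁ l₂ l₃) :
    crI Pb < crI Pa := by
  obtain ⟨j₁, j₂, j₃, h12, h13, h23, hneg, hothers⟩ := hmut
  have hPal : ∀ l : Fin n, l ≠ i₀ → Pa l = P l := by intro l h; rw [hPa]; simp [h]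
  have hPbl : ∀ l : Fin n, l ≠ i₀ → Pb l = P l := by intro l h; rw [hPb]; simp [h]
  have hIn : j₁ = i₀ ∨ j₂ = i₀ ∨ j₃ = i₀ := by
    by_contra hno
    push_neg at hno
    obtain ⟨hn1, hn2, hn3⟩ := hno
    simp only [detI, hPal j₁ hn1, hPal j₂ hn2, hPal j₃ hn3,
      hPbl j₁ hn1, hPbl j₂ hn2, hPbl j₃ hn3] at hneg
    exact absurd hneg (not_lt.2 (mul_self_nonneg _))
  rcases hIn with rfl | h2i | h3i
  · -- j₁ = i₀
    apply main_aux n P hinj j₁ v hray a b ha hab Pa Pb hPa hPb hgpa hgpb j₂ j₃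
      (Ne.symm h12) (Ne.symm h13) h23
    · simp only [detI, hPal j₂ (Ne.symm h12), hPal j₃ (Ne.symm h13),
        hPbl j₂ (Ne.symm h12), hPbl j₃ (Ne.symm h13)] at hneg
      exact hneg
    · exact hothers
  · -- j₂ = i₀
    subst h2i
    apply main_aux n P hinj j₂ v hray a b ha hab Pa Pb hPa hPb hgpa hgpb j₁ j₃
      h12 (Ne.symm h23) h13
    · simp only [detI, hPal j₁ h12, hPal j₃ (Ne.symm h23),
        hPbl j₁ h12, hPbl j₃ (Ne.symm h23)] at hneg
      rw [det3_swap12 (Pa j₂) (P j₁) (P j₃), det3_swap12 (Pb j₂) (P j₁) (P j₃),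
        neg_mul_neg] at hneg
      exact hneg
    · have hsets : ({j₁, j₂, j₃} : Finset (Fin n)) = {j₂, j₁, j₃} := by
        ext k; simp; tauto
      intro l₁ l₂ l₃ a1 a2 a3 a4
      exact hothers l₁ l₂ l₃ a1 a2 a3 (by rw [hsets]; exact a4)
  · -- j₃ = i₀
    subst h3i
    apply main_aux n P hinj j₃ v hray a b ha hab Pa Pb hPa hPb hgpa hgpb j₁ j₂
      h13 h23 h12
    · simp only [detI, hPal j₁ h13, hPal j₂ h23,
        hPbl j₁ h13, hPbl j₂ h23] at hneg
      rw [det3_cycle (Pa j₃) (P j₁) (P j₂), det3_cycle (Pb j₃) (P j₁) (P j₂)] at hneg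
      exact hneg
    · have hsets : ({j₁, j₂, j₃} : Finset (Fin n)) = {j₃, j₁, j₂} := by
        ext k; simp; tauto
      intro l₁ l₂ l₃ a1 a2 a3 a4
      exact hothers l₁ l₂ l₃ a1 a2 a3 (by rw [hsets]; exact a4)
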